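/- arXiv:2604.16188 — 2 statements merged into one kernel-verified Lean document; each statement's English description precedes it below -/
import Mathlib

section
/- For every a ≥ 4 divisible by 4 and every odd b ≥ 3, the cyclic Ramsey number of the nested matching of order a versus a star of order b satisfies R_cyc(M_a^nest, S_b) ≥ a + b − 3. -/
open SimpleGraph Finset

/-- A symmetric `k`-edge-coloring `χ` of the complete graph on `Fin n` contains a copy of `H`
in color `j` via a strictly increasing embedding. -/
def ContainsOrd {m n k : ℕ} (H : SimpleGraph (Fin m))
    (χ : Fin n → Fin n → Fin k) (j : Fin k) : Prop :=
  ∃ φ : Fin m → Fin n, StrictMono φ ∧ ∀ u v : Fin m, H.Adj u v → χ (φ u) (φ v) = j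

/-- Contains a copy via an embedding that is increasing up to a cyclic permutation. -/
def ContainsCyc {m n k : ℕ} (H : SimpleGraph (Fin m))
    (χ : Fin n → Fin n → Fin k) (j : Fin k) : Prop :=
  ∃ φ : Fin m → Fin n, (∃ t : Fin m, StrictMono fun i : Fin m => φ (i + t)) ∧
    ∀ u v : Fin m, H.Adj u v → χ (φ u) (φ v) = j

/-- Contains a copy via an arbitrary injective embedding. -/
def ContainsStd {m n k : ℕ} (H : SimpleGraph (Fin m))
    (χ : Fin n → Fin n → Fin k) (j : Fin k) : Prop :=
  ∃ φ : Fin m → Fin n, Function.Injective φ ∧ ∀ u v : Fin m, H.Adj u v → χ (φ u) (φ v) = j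

/-- The ordered Ramsey number of a family of graphs. -/
noncomputable def Rord {k : ℕ} (m : Fin k → ℕ) (H : ∀ j, SimpleGraph (Fin (m j))) : ℕ :=
  sInf {n | ∀ χ : Fin n → Fin n → Fin k, (∀ u v, χ u v = χ v u) → ∃ j, ContainsOrd (H j) χ j}

/-- The cyclic Ramsey number of a family of graphs. -/
noncomputable def Rcyc {k : ℕ} (m : Fin k → ℕ) (H : ∀ j, SimpleGraph (Fin (m j))) : ℕ :=
  sInf {n | ∀ χ : Fin n → Fin n → Fin k, (∀ u v, χ u v = χ v u) → ∃ j, ContainsCyc (H j) χ j}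

/-- The standard Ramsey number of a family of graphs. -/
noncomputable def Rstd {k : ℕ} (m : Fin k → ℕ) (H : ∀ j, SimpleGraph (Fin (m j))) : ℕ :=
  sInf {n | ∀ χ : Fin n → Fin n → Fin k, (∀ u v, χ u v = χ v u) → ∃ j, ContainsStd (H j) χ j}

/-- The two-color ordered Ramsey number. -/
noncomputable def Rord2 {a b : ℕ} (H₁ : SimpleGraph (Fin a)) (H₂ : SimpleGraph (Fin b)) : ℕ :=
  sInf {n | ∀ χ : Fin n → Fin n → Fin 2, (∀ u v, χ u v = χ v u) →
    ContainsOrd H₁ χ 0 ∨ ContainsOrd H₂ χ 1}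

/-- The two-color cyclic Ramsey number. -/
noncomputable def Rcyc2 {a b : ℕ} (H₁ : SimpleGraph (Fin a)) (H₂ : SimpleGraph (Fin b)) : ℕ :=
  sInf {n | ∀ χ : Fin n → Fin n → Fin 2, (∀ u v, χ u v = χ v u) →
    ContainsCyc H₁ χ 0 ∨ ContainsCyc H₂ χ 1}

/-- The monotone path of order `n`. -/
def monPath (n : ℕ) : SimpleGraph (Fin n) :=
  SimpleGraph.fromRel fun u v => (u : ℕ) + 1 = (v : ℕ)

/-- The monotone cycle of order `n`. -/
def monCycle (n : ℕ) : SimpleGraph (Fin n) :=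
  SimpleGraph.fromRel fun u v => (u : ℕ) + 1 = (v : ℕ) ∨ ((u : ℕ) = 0 ∧ (v : ℕ) = n - 1)

/-- The start-central star of order `n` (center `0`). -/
def starSC (n : ℕ) : SimpleGraph (Fin n) :=
  SimpleGraph.fromRel fun u _ => (u : ℕ) = 0

/-- The star of order `n` with center `c`. -/
def starG (n : ℕ) (c : Fin n) : SimpleGraph (Fin n) :=
  SimpleGraph.fromRel fun u _ => u = c

/-- The nested matching of order `n`. -/
def nestedMatching (n : ℕ) : SimpleGraph (Fin n) :=
  SimpleGraph.fromRel fun u v => (u : ℕ) + (v : ℕ) = n - 1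

/-- Rotational isomorphism of two graphs on `Fin m`. -/
def RotIso {m : ℕ} (G₁ G₂ : SimpleGraph (Fin m)) : Prop :=
  ∃ s : Fin m, ∀ u v : Fin m, G₁.Adj u v ↔ G₂.Adj (u + s) (v + s)

/-!
Lower bound: put `N = a + b - 4`, `b = 2d + 3`, and colour a pair of `Fin N` with the second
colour exactly when its circular distance is at most `d`. Every vertex then has only `2d = b - 3`
neighbours in the second colour, so there is no star of order `b`. A cyclically increasing copy
of the nested matching contains two edges `{a/2 - 1, a/2}` and `{a - 1, 0}` that join cyclically
consecutive vertices of the copy. Both of these gaps exceed `d`, and each of the other `a - 2`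
gaps is at least `1`. Since the gaps sum to `N`, this gives `N ≥ a + 2d`, which is false.

Since `sInf ∅ = 0`, we also need the Ramsey number to be finite. On `(a/2) b` vertices, either
some vertex has `b - 1` neighbours in the second colour, which gives a star, or each of the first
`a/2` vertices has a first-colour partner in its own block of `b - 1` vertices further up. These
pairs form a nested matching.
-/

open Fin.CommRing

section Embeddings

variable {m n k : ℕ} {H : SimpleGraph (Fin m)} {j : Fin k}

theorem ContainsOrd.containsCyc [NeZero m] {χ : Fin n → Fin n → Fin k}
    (h : ContainsOrd H χ j) : ContainsCyc H χ j := by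
  obtain ⟨φ, hφ, hadj⟩ := h
  exact ⟨φ, ⟨0, by simpa using hφ⟩, hadj⟩

theorem ContainsCyc.containsStd {χ : Fin n → Fin n → Fin k} (h : ContainsCyc H χ j) :
    ContainsStd H χ j := by
  obtain ⟨φ, ⟨t, hψ⟩, hadj⟩ := h
  have := NeZero.of_pos t.pos
  refine ⟨φ, fun u v huv => ?_, hadj⟩
  have : u - t = v - t := hψ.injective (by simpa using huv)
  simpa using this

theorem ContainsCyc.of_comp {N : ℕ} {χ : Fin N → Fin N → Fin k} {f : Fin n → Fin N}
    (hf : StrictMono f) (h : ContainsCyc H (fun u v => χ (f u) (f v)) j) :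
    ContainsCyc H χ j := by
  obtain ⟨φ, ⟨t, hψ⟩, hadj⟩ := h
  exact ⟨f ∘ φ, ⟨t, hf.comp hψ⟩, hadj⟩

end Embeddings

theorem lt_rcyc2 {a b N : ℕ} {H₁ : SimpleGraph (Fin a)} {H₂ : SimpleGraph (Fin b)}
    (hfin : ∃ n, ∀ χ : Fin n → Fin n → Fin 2, (∀ u v, χ u v = χ v u) →
      ContainsCyc H₁ χ 0 ∨ ContainsCyc H₂ χ 1)
    (χ : Fin N → Fin N → Fin 2) (hχ : ∀ u v, χ u v = χ v u)
    (h₁ : ¬ ContainsCyc H₁ χ 0) (h₂ : ¬ ContainsCyc H₂ χ 1) : N < Rcyc2 H₁ H₂ := by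
  refine Nat.lt_of_succ_le (le_csInf hfin fun n hn => ?_)
  by_contra! hnN
  have hle : n ≤ N := by omega
  rcases hn (fun u v => χ (Fin.castLE hle u) (Fin.castLE hle v)) (fun u v => hχ _ _) with h | h
  exacts [h₁ (h.of_comp (Fin.strictMono_castLE hle)),
    h₂ (h.of_comp (Fin.strictMono_castLE hle))]

theorem StrictMono.val_add_le {a N : ℕ} {ψ : Fin a → Fin N} (hψ : StrictMono ψ) {p q : Fin a}
    (h : p ≤ q) : (ψ p).val + (q.val - p.val) ≤ (ψ q).val := by
  have hcard := card_le_card_of_injOn ψ (s := Icc p q) (t := Icc (ψ p) (ψ q))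
    (fun i hi => by
      simp only [coe_Icc, Set.mem_Icc] at hi ⊢
      exact ⟨hψ.monotone hi.1, hψ.monotone hi.2⟩)
    hψ.injective.injOn
  have hpq : ψ p ≤ ψ q := hψ.monotone h
  rw [Fin.card_Icc, Fin.card_Icc] at hcard
  rw [Fin.le_def] at h hpq
  omega

/-- The cyclic gaps `ψ (i + 1) - ψ i` are positive and sum to `N`. -/
theorem StrictMono.gap_add_gap_le {a N : ℕ} [NeZero a] {ψ : Fin a → Fin N}
    (hψ : StrictMono ψ) {i i' : Fin a} (h : i ≠ i') :
    (ψ (i + 1) - ψ i).val + (ψ (i' + 1) - ψ i').val + a ≤ N + 2 := by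
  wlog hlt : i < i' generalizing i i'
  · have := this h.symm (lt_of_le_of_ne (not_lt.1 hlt) h.symm)
    omega
  obtain ⟨n, rfl⟩ := Nat.exists_eq_add_one_of_ne_zero (NeZero.ne a)
  have hi : (i + 1).val = i.val + 1 := by
    rw [Fin.val_add_one, if_neg (lt_of_lt_of_le hlt (Fin.le_last i')).ne]
  have hle : i + 1 ≤ i' := by rw [Fin.le_def, hi]; exact hlt
  have hstep : ψ i ≤ ψ (i + 1) := hψ.monotone (by rw [Fin.le_def, hi]; omega)
  have h₀ := hψ.val_add_le (Fin.zero_le i)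
  have h₁ := hψ.val_add_le hle
  have hN := (ψ (Fin.last n)).isLt
  rw [Fin.sub_val_of_le hstep]
  rw [Fin.le_def] at hstep
  by_cases hl : i' = Fin.last n
  · subst hl
    have hwrap : ψ 0 < ψ (Fin.last n) := hψ (lt_of_le_of_lt (Fin.zero_le i) hlt)
    rw [Fin.last_add_one, Fin.coe_sub_iff_lt.2 hwrap]
    simp only [Fin.val_last, Fin.val_zero] at h₀ h₁
    omega
  · have hi' : (i' + 1).val = i'.val + 1 := by rw [Fin.val_add_one, if_neg hl]
    have hstep' : ψ i' ≤ ψ (i' + 1) := hψ.monotone (by rw [Fin.le_def, hi']; omega)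
    have h₂ := hψ.val_add_le (Fin.le_last (i' + 1))
    rw [Fin.sub_val_of_le hstep']
    rw [Fin.le_def] at hstep'
    simp only [Fin.val_last, Fin.val_zero] at h₀ h₂
    omega

section CircularDistance

variable {N k : ℕ} {j : Fin k}

def circDist (x y : Fin N) : ℕ := min (x - y).val (y - x).val

theorem circDist_comm (x y : Fin N) : circDist x y = circDist y x := min_comm _ _

theorem card_filter_circDist_le (x : Fin N) (d : ℕ) :
    #{y | y ≠ x ∧ circDist x y ≤ d} ≤ 2 * d := by
  have := NeZero.of_pos x.pos
  have hsub : ({y | y ≠ x ∧ circDist x y ≤ d} : Finset (Fin N)) ⊆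
      (Icc 1 d).image (fun r : ℕ => x + r) ∪ (Icc 1 d).image (fun r : ℕ => x - r) := by
    intro y hy
    simp only [mem_filter, mem_univ, true_and, circDist, min_le_iff] at hy
    obtain ⟨hyx, hd | hd⟩ := hy
    · refine mem_union_right _ (mem_image.2 ⟨(x - y).val, mem_Icc.2 ⟨?_, hd⟩, ?_⟩)
      · exact Nat.pos_of_ne_zero (by simpa [Fin.ext_iff, sub_eq_zero] using hyx.symm)
      · rw [Fin.cast_val_eq_self, sub_sub_cancel]
    · refine mem_union_left _ (mem_image.2 ⟨(y - x).val, mem_Icc.2 ⟨?_, hd⟩, ?_⟩)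
      · exact Nat.pos_of_ne_zero (by simpa [Fin.ext_iff, sub_eq_zero] using hyx)
      · rw [Fin.cast_val_eq_self, add_sub_cancel]
  calc #{y | y ≠ x ∧ circDist x y ≤ d}
      ≤ #((Icc 1 d).image (fun r : ℕ => x + r)) + #((Icc 1 d).image (fun r : ℕ => x - r)) :=
        (card_le_card hsub).trans (card_union_le _ _)
    _ ≤ d + d := by
        gcongr <;> exact card_image_le.trans (by simp)
    _ = 2 * d := by ring

theorem not_containsStd_starG {b d : ℕ} (c : Fin b) (hb : 2 * d + 1 < b)
    {χ : Fin N → Fin N → Fin k} (hχ : ∀ x y, χ x y = j → circDist x y ≤ d) :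
    ¬ ContainsStd (starG b c) χ j := by
  rintro ⟨φ, hφ, hadj⟩
  have hsub : (univ.erase c).image φ ⊆
      ({y | y ≠ φ c ∧ circDist (φ c) y ≤ d} : Finset (Fin N)) := by
    simp only [subset_iff, mem_image, mem_erase, mem_univ, and_true, mem_filter, true_and]
    rintro _ ⟨v, hv, rfl⟩
    refine ⟨hφ.ne hv, hχ _ _ (hadj c v ?_)⟩
    rw [starG, fromRel_adj]
    exact ⟨Ne.symm hv, Or.inl rfl⟩
  have := (card_le_card hsub).trans (card_filter_circDist_le (φ c) d)
  rw [card_image_of_injective _ hφ, card_erase_of_mem (mem_univ c), card_univ,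
    Fintype.card_fin] at this
  omega

theorem not_containsCyc_of_adj_add_one {a d : ℕ} [NeZero a] {H : SimpleGraph (Fin a)}
    {u w : Fin a} (huw : u ≠ w) (hu : H.Adj u (u + 1)) (hw : H.Adj w (w + 1))
    {χ : Fin N → Fin N → Fin k} (hχ : ∀ x y, χ x y = j → d < circDist x y)
    (hN : N < a + 2 * d) : ¬ ContainsCyc H χ j := by
  rintro ⟨φ, ⟨t, hψ⟩, hφ⟩
  have hlong : ∀ v, H.Adj v (v + 1) → d < (φ (v + 1) - φ v).val := fun v hv =>
    (lt_min_iff.1 (hχ _ _ (hφ _ _ hv))).2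
  have key := hψ.gap_add_gap_le (i := u - t) (i' := w - t) (by simpa using huw)
  have hshift : ∀ v, v - t + 1 + t = v + 1 := fun v => by ring
  simp only [hshift, sub_add_cancel] at key
  have := hlong u hu
  have := hlong w hw
  omega

theorem nestedMatching_adj_add_one {m : ℕ} [NeZero (m + m)] {u : Fin (m + m)}
    (hu : u.val + 1 = m ∨ u.val + 1 = m + m) : (nestedMatching (m + m)).Adj u (u + 1) := by
  have hm : 2 ≤ m + m := by have := NeZero.ne (m + m); omega
  have hval : (u + 1).val = if u.val + 1 = m + m then 0 else u.val + 1 := by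
    rw [Fin.val_add, Fin.val_one', Nat.mod_eq_of_lt (a := 1) (by omega)]
    split_ifs with h
    · rw [h, Nat.mod_self]
    · exact Nat.mod_eq_of_lt (by omega)
  rw [nestedMatching, fromRel_adj, Ne, Fin.ext_iff, hval]
  split_ifs <;> omega

theorem not_containsCyc_nestedMatching {m d : ℕ} (hm : m ≠ 0)
    {χ : Fin N → Fin N → Fin k} (hχ : ∀ x y, χ x y = j → d < circDist x y)
    (hN : N < m + m + 2 * d) : ¬ ContainsCyc (nestedMatching (m + m)) χ j := by
  have : NeZero (m + m) := ⟨by omega⟩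
  let u : Fin (m + m) := ⟨m - 1, by omega⟩
  let w : Fin (m + m) := ⟨m + m - 1, by omega⟩
  exact not_containsCyc_of_adj_add_one (u := u) (w := w)
    (Fin.ne_of_val_ne (by dsimp [u, w]; omega))
    (nestedMatching_adj_add_one (Or.inl (by dsimp [u]; omega)))
    (nestedMatching_adj_add_one (Or.inr (by dsimp [w]; omega))) hχ hN

end CircularDistance

def circulantColoring (N d : ℕ) (x y : Fin N) : Fin 2 := if circDist x y ≤ d then 1 else 0

theorem circulantColoring_comm (N d : ℕ) (x y : Fin N) :
    circulantColoring N d x y = circulantColoring N d y x := by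
  rw [circulantColoring, circulantColoring, circDist_comm]

theorem circulantColoring_eq_one {N d : ℕ} {x y : Fin N} (h : circulantColoring N d x y = 1) :
    circDist x y ≤ d := by
  by_contra h'
  simp [circulantColoring, h'] at h

theorem circulantColoring_eq_zero {N d : ℕ} {x y : Fin N} (h : circulantColoring N d x y = 0) :
    d < circDist x y := by
  by_contra! h'
  simp [circulantColoring, h'] at h

section UpperBound

variable {N k : ℕ} {j : Fin k}

theorem containsCyc_starG {b : ℕ} (c : Fin b) {χ : Fin N → Fin N → Fin k}
    (hχ : ∀ x y, χ x y = χ y x) {s : Finset (Fin N)} (hs : #s = b) {x : Fin N} (hx : x ∈ s)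
    (hxs : ∀ y ∈ s, y ≠ x → χ x y = j) : ContainsCyc (starG b c) χ j := by
  have := NeZero.of_pos c.pos
  set e := s.orderIsoOfFin hs
  set p := e.symm ⟨x, hx⟩
  have he : ∀ i, (e i : Fin N) = x ↔ i = p := fun i => by
    rw [OrderIso.eq_symm_apply, Subtype.ext_iff]
  have hleaf : ∀ v, v ≠ c → χ x (e (v + (p - c))) = j := fun v hv =>
    hxs _ (e _).2 fun h => hv (by linear_combination (he _).1 h)
  have hcenter : (e (c + (p - c)) : Fin N) = x := (he _).2 (by ring)
  refine ⟨fun i => e (i + (p - c)), ⟨c - p, fun i i' hii' => ?_⟩, ?_⟩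
  · have hrot : ∀ i : Fin b, i + (c - p) + (p - c) = i := fun i => by ring
    simpa only [hrot, Subtype.coe_lt_coe] using e.strictMono hii'
  · rintro u v ⟨huv, rfl | rfl⟩
    · simp only [hcenter]; exact hleaf v (Ne.symm huv)
    · simp only [hcenter]; rw [hχ]; exact hleaf u huv

theorem exists_val_mem_Ico_eq {L : ℕ} {χ : Fin N → Fin N → Fin k} {x : Fin N}
    (hx : #{y | y ≠ x ∧ χ x y ≠ j} < L) {lo : ℕ} (hlo : x.val < lo) (hN : lo + L ≤ N) :
    ∃ y : Fin N, y.val ∈ Ico lo (lo + L) ∧ χ x y = j := by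
  by_contra! h
  have hsub : (Ico lo (lo + L)).attachFin (fun i hi => by rw [mem_Ico] at hi; omega) ⊆
      ({y | y ≠ x ∧ χ x y ≠ j} : Finset (Fin N)) := by
    intro y hy
    rw [mem_attachFin] at hy
    simp only [mem_filter, mem_univ, true_and]
    exact ⟨fun hyx => by rw [hyx, mem_Ico] at hy; omega, h y hy⟩
  have := card_le_card hsub
  rw [card_attachFin, Nat.card_Ico] at this
  omega

/-- The left endpoints are `0, …, m - 1`; the partner of `m - 1 - q` is taken from the `q`-th
block of `L` vertices above them. -/
theorem containsOrd_nestedMatching {m L : ℕ} {χ : Fin N → Fin N → Fin k}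
    (hχ : ∀ x y, χ x y = χ y x) (hdeg : ∀ x, #{y | y ≠ x ∧ χ x y ≠ j} < L)
    (hN : m * (L + 1) ≤ N) : ContainsOrd (nestedMatching (m + m)) χ j := by
  rw [mul_add_one] at hN
  have hwin : ∀ q q' : ℕ, q < q' → m + q * L + L ≤ m + q' * L := fun q q' h => by
    have := Nat.mul_le_mul_right L (Nat.succ_le_of_lt h)
    rw [Nat.succ_mul] at this
    omega
  let left : Fin m → Fin N := fun i => ⟨i, by omega⟩
  choose r hr hrχ using fun q : Fin m =>
    exists_val_mem_Ico_eq (hdeg (left q.rev)) (lo := m + q * L) (by dsimp [left]; omega)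
      ((hwin q m q.isLt).trans (by omega))
  have hsep : ∀ q q' : Fin m, q < q' → r q < r q' := fun q q' h => by
    have := hr q
    have := hr q'
    have := hwin q q' h
    rw [mem_Ico] at *
    rw [Fin.lt_def]
    omega
  have hleft : ∀ i q, left i < r q := fun i q => by
    have := hr q
    rw [mem_Ico] at this
    rw [Fin.lt_def]
    simp only [left]
    omega
  have hpair : ∀ i q, i.val + (m + q.val) = m + m - 1 → χ (left i) (r q) = j := fun i q h => by
    rw [← hrχ q, show i = q.rev from Fin.ext (by rw [Fin.val_rev]; omega)]
  refine ⟨Fin.append left r, fun p p' hpp' => ?_, fun u v huv => ?_⟩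
  · induction p using Fin.addCases <;> induction p' using Fin.addCases <;>
      simp only [Fin.append_left, Fin.append_right] <;>
      simp only [Fin.lt_def, Fin.val_castAdd, Fin.val_natAdd] at hpp'
    · exact Fin.lt_def.2 hpp'
    · exact hleft _ _
    · omega
    · exact hsep _ _ (Fin.lt_def.2 (by omega))
  · rw [nestedMatching, fromRel_adj] at huv
    induction u using Fin.addCases <;> induction v using Fin.addCases <;>
      simp only [Fin.append_left, Fin.append_right] <;>
      simp only [Fin.val_castAdd, Fin.val_natAdd, Ne, Fin.ext_iff] at huv
    · omega
    · exact hpair _ _ (by omega)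
    · rw [hχ]; exact hpair _ _ (by omega)
    · omega

end UpperBound

theorem containsCyc_nestedMatching_or_starG {m b : ℕ} (hm : m ≠ 0) (c : Fin b)
    {χ : Fin (m * b) → Fin (m * b) → Fin 2} (hχ : ∀ x y, χ x y = χ y x) :
    ContainsCyc (nestedMatching (m + m)) χ 0 ∨ ContainsCyc (starG b c) χ 1 := by
  by_cases hdeg : ∃ x, b - 1 ≤ #{y | y ≠ x ∧ χ x y = 1}
  · obtain ⟨x, hx⟩ := hdeg
    obtain ⟨T, hT, hTcard⟩ := exists_subset_card_eq hx
    have hxT : x ∉ T := fun h => (mem_filter.1 (hT h)).2.1 rfl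
    refine Or.inr (containsCyc_starG c hχ (s := insert x T) ?_ (mem_insert_self x T) ?_)
    · rw [card_insert_of_notMem hxT, hTcard]
      have := c.pos
      omega
    · exact fun y hy hyx => (mem_filter.1 (hT ((mem_insert.1 hy).resolve_left hyx))).2.2
  · simp only [not_exists, not_le] at hdeg
    have : NeZero (m + m) := ⟨by omega⟩
    have hne : ∀ z : Fin 2, z ≠ 0 ↔ z = 1 := by decide
    refine Or.inl (containsOrd_nestedMatching hχ (L := b - 1) (fun x => ?_) ?_).containsCyc
    · simpa only [hne] using hdeg x
    · rw [Nat.sub_add_cancel c.pos]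

theorem stmt16 (a b : ℕ) (ha : 4 ≤ a) (h4 : 4 ∣ a) (hb : 3 ≤ b) (hob : Odd b)
    (c : Fin b) :
    a + b - 3 ≤ Rcyc2 (nestedMatching a) (starG b c) := by
  obtain ⟨m, rfl⟩ : Even a := even_iff_two_dvd.2 ((by norm_num : 2 ∣ 4).trans h4)
  obtain ⟨d, rfl⟩ : ∃ d, b = 2 * d + 3 := by
    obtain ⟨e, rfl⟩ := hob
    exact ⟨e - 1, by omega⟩
  have hm : m ≠ 0 := by omega
  have := lt_rcyc2 ⟨m * (2 * d + 3), fun χ hχ => containsCyc_nestedMatching_or_starG hm c hχ⟩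
    (circulantColoring (m + m + 2 * d - 1) d) (circulantColoring_comm _ d)
    (not_containsCyc_nestedMatching hm (fun _ _ => circulantColoring_eq_zero) (by omega))
    (fun h => not_containsStd_starG c (by omega) (fun _ _ => circulantColoring_eq_one)
      h.containsStd)
  omega
end

section
/- Let a ≥ 2 be even and b ≥ 2 with a ≡ 2 (mod 4) or b even. Then R_cyc(M_a^nest, S_b) ≥ a + b − 2. -/
open SimpleGraph Finset

def circd (N : ℕ) (u v : Fin N) : ℕ := min (v - u).val (u - v).val

lemma finSubVal {n : ℕ} (x y : Fin n) :
    (x - y).val = if x.val < y.val then x.val + n - y.val else x.val - y.val := by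
  have hx := x.isLt; have hy := y.isLt
  rw [Fin.sub_def]
  simp only [Fin.val_mk]
  by_cases h : x.val < y.val
  · rw [if_pos h, Nat.mod_eq_of_lt (by omega)]; omega
  · rw [if_neg h]
    have h2 : n - y.val + x.val = n + (x.val - y.val) := by omega
    rw [h2, Nat.add_mod_left, Nat.mod_eq_of_lt (by omega)]

lemma circd_comm {N : ℕ} (u v : Fin N) : circd N u v = circd N v u := min_comm _ _

lemma circ_sub_add_sub {N : ℕ} {x y : Fin N} (h : x ≠ y) : (x - y).val + (y - x).val = N := by
  have hne : x.val ≠ y.val := fun hh => h (Fin.ext hh)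
  have hx := x.isLt; have hy := y.isLt
  rw [finSubVal, finSubVal]
  split <;> split <;> omega

lemma smono_gap {a N : ℕ} {ψ : Fin a → Fin N} (h : StrictMono ψ) :
    ∀ (d : ℕ) (i j : Fin a), i.val + d = j.val → (ψ i).val + d ≤ (ψ j).val := by
  intro d
  induction d with
  | zero =>
    intro i j hij
    have : i = j := Fin.ext (by omega)
    subst this; omega
  | succ d ih =>
    intro i j hij
    have hja := j.isLt
    have h1 := ih i ⟨i.val + d, by omega⟩ rfl
    have h2 : (ψ ⟨i.val + d, by omega⟩).val < (ψ j).val :=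
      h (show (⟨i.val + d, by omega⟩ : Fin a) < j by rw [Fin.lt_def]; simp; omega)
    omega

lemma circ_bounds {N : ℕ} {P Q : Fin N} (h : P.val < Q.val) {m : ℕ} (hm : m ≤ circd N P Q) :
    P.val + m ≤ Q.val ∧ Q.val + m ≤ P.val + N := by
  unfold circd at hm
  rw [finSubVal, finSubVal, if_neg (by omega), if_pos h] at hm
  have h1 := le_min_iff.mp hm
  have hQ := Q.isLt
  omega

lemma circ_le {N : ℕ} {P Q : Fin N} (h : P.val < Q.val) {s : ℕ} (hs : circd N P Q ≤ s) :
    Q.val - P.val ≤ s ∨ P.val + N - Q.val ≤ s := by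
  unfold circd at hs
  rw [finSubVal, finSubVal, if_neg (by omega), if_pos h] at hs
  exact min_le_iff.mp hs

lemma fin2cases (z : Fin 2) : z = 0 ∨ z = 1 := by omega

lemma phiEq17 {m n : ℕ} [NeZero m] (φ : Fin m → Fin n) (t : Fin m) (i : Fin m) :
    (fun j => φ (j + t)) (i - t) = φ i := by simp [sub_add_cancel]

-- generic star refutation core: if color-1 forces the difference value into a small set,
-- we get ≥ b-1 distinct values in that set.
lemma star_refute {N b : ℕ} (hN : 0 < N) (c : Fin b) (hb : 2 ≤ b)
    (χ : Fin N → Fin N → Fin 2)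
    (I : Finset ℕ) (hI : I.card ≤ b - 2)
    (hcol : ∀ P Q : Fin N, P ≠ Q → χ P Q = 1 → (Q - P).val ∈ I) :
    ¬ ContainsCyc (starG b c) χ 1 := by
  haveI : NeZero b := ⟨by omega⟩
  haveI : NeZero N := ⟨by omega⟩
  rintro ⟨φ, ⟨t, hmono⟩, hedge⟩
  have hφ : φ = (fun j => φ (j + t)) ∘ (fun i => i - t) := by
    funext i; simp [sub_add_cancel]
  have hinj : Function.Injective φ := by
    rw [hφ]
    exact hmono.injective.comp (fun i j hij => by
      have : i - t + t = j - t + t := by rw [hij]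
      simpa [sub_add_cancel] using this)
  set w := φ c with hw
  have hsub : ∀ v ∈ (univ : Finset (Fin b)).erase c, (φ v - w).val ∈ I := by
    intro v hv
    have hvc : v ≠ c := Finset.ne_of_mem_erase hv
    have hadj : (starG b c).Adj c v := by
      rw [starG, SimpleGraph.fromRel_adj]
      exact ⟨Ne.symm hvc, Or.inl rfl⟩
    exact hcol w (φ v) (fun hh => hvc (hinj hh.symm)) (hedge c v hadj)
  have hinjOn : Set.InjOn (fun v => (φ v - w).val) ((univ : Finset (Fin b)).erase c) := by
    intro x _ y _ hxy
    have h1 : φ x - w = φ y - w := Fin.ext hxy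
    have h2 : φ x = φ y := by
      have := congrArg (fun z => z + w) h1
      simpa [sub_add_cancel] using this
    exact hinj h2
  have hcard : ((univ : Finset (Fin b)).erase c).card ≤ I.card := by
    apply Finset.card_le_card_of_injOn _ (fun v hv => hsub v hv) hinjOn
  rw [Finset.card_erase_of_mem (Finset.mem_univ c), Finset.card_univ, Fintype.card_fin] at hcard
  omega

lemma starA (b k : ℕ) (hb : 2 ≤ b) (c : Fin b) :
    ¬ ContainsCyc (starG b c)
      (fun u v : Fin (4*k+2+b-3) => if circd (4*k+2+b-3) u v ≤ 2*k then (0 : Fin 2) else 1) 1 := by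
  set N := 4*k+2+b-3 with hN
  have hN0 : 0 < N := by omega
  apply star_refute hN0 c hb _ (Finset.Icc (2*k+1) (N - (2*k+1))) ?_ ?_
  · rw [Nat.card_Icc]; omega
  · intro P Q hPQ hcol
    have hd : ¬ (circd N P Q ≤ 2*k) := by
      intro hh; rw [if_pos hh] at hcol; exact absurd hcol (by decide)
    have hsum := circ_sub_add_sub hPQ
    unfold circd at hd
    rw [Finset.mem_Icc]
    omega

lemma starB (a m : ℕ) (ha : 2 ≤ a) (hm : 1 ≤ m) (c : Fin (2*m)) :
    ¬ ContainsCyc (starG (2*m) c)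
      (fun u v : Fin (a+2*m-3) => if circd (a+2*m-3) u v ≤ m - 1 then (1 : Fin 2) else 0) 1 := by
  set N := a+2*m-3 with hN
  have hN0 : 0 < N := by omega
  apply star_refute hN0 c (by omega) _
      (Finset.Icc 1 (m-1) ∪ Finset.Icc (N-m+1) (N-1)) ?_ ?_
  · calc _ ≤ (Finset.Icc 1 (m-1)).card + (Finset.Icc (N-m+1) (N-1)).card :=
        Finset.card_union_le _ _
    _ ≤ 2*m - 2 := by rw [Nat.card_Icc, Nat.card_Icc]; omega
  · intro P Q hPQ hcol
    have hd : circd N P Q ≤ m - 1 := by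
      by_contra hh; rw [if_neg hh] at hcol; exact absurd hcol (by decide)
    have hsum := circ_sub_add_sub hPQ
    have hlt := (Q - P).isLt
    have hlt2 := (P - Q).isLt
    have hne : (Q - P).val ≠ 0 := by intro h0; omega
    unfold circd at hd
    simp only [Finset.mem_union, Finset.mem_Icc]
    omega

lemma matchA (b k : ℕ) (hb : 2 ≤ b) :
    ¬ ContainsCyc (nestedMatching (4*k+2))
      (fun u v : Fin (4*k+2+b-3) => if circd (4*k+2+b-3) u v ≤ 2*k then (0 : Fin 2) else 1) 0 := by
  haveI : NeZero (4*k+2) := ⟨by omega⟩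
  rintro ⟨φ, ⟨t, hmono⟩, hedge⟩
  set ψ : Fin (4*k+2) → Fin (4*k+2+b-3) := fun j => φ (j + t) with hψ
  have hφ : ∀ i, φ i = ψ (i - t) := by intro i; simp [hψ, sub_add_cancel]
  have hu : k < 4*k+2 := by omega
  have hv : 3*k+1 < 4*k+2 := by omega
  have hadj : (nestedMatching (4*k+2)).Adj ⟨k, hu⟩ ⟨3*k+1, hv⟩ := by
    rw [nestedMatching, SimpleGraph.fromRel_adj]
    refine ⟨Fin.ne_of_val_ne (show k ≠ 3*k+1 by omega), Or.inl ?_⟩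
    show k + (3*k+1) = 4*k+2 - 1
    omega
  have hcol0 := hedge _ _ hadj
  rw [hφ, hφ] at hcol0
  set x : Fin (4*k+2) := ⟨k, hu⟩ - t with hx
  set y : Fin (4*k+2) := ⟨3*k+1, hv⟩ - t with hy
  have hcol : (if circd (4*k+2+b-3) (ψ x) (ψ y) ≤ 2*k then (0:Fin 2) else 1) = 0 := hcol0
  have hcirc : circd (4*k+2+b-3) (ψ x) (ψ y) ≤ 2*k := by
    by_contra hh; rw [if_neg hh] at hcol; exact absurd hcol (by decide)
  have hxval : x.val = if k < t.val then k + (4*k+2) - t.val else k - t.val := finSubVal _ _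
  have hyval : y.val = if 3*k+1 < t.val then 3*k+1 + (4*k+2) - t.val else 3*k+1 - t.val :=
    finSubVal _ _
  have ht := t.isLt
  have key : ∀ X Y : Fin (4*k+2), X.val + (2*k+1) = Y.val →
      circd (4*k+2+b-3) (ψ X) (ψ Y) ≤ 2*k → False := by
    intro X Y hXY hC
    have hYa := Y.isLt
    have hlast : 4*k+2 - 1 < 4*k+2 := by omega
    have h1 := smono_gap hmono (2*k+1) X Y hXY
    have h2 := smono_gap hmono (4*k+2 - 1 - Y.val) Y ⟨4*k+2-1, hlast⟩ (by simp; omega)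
    have h3 := smono_gap hmono X.val ⟨0, by omega⟩ X (by simp)
    have h4 := (ψ ⟨4*k+2-1, hlast⟩).isLt
    have hPQ : (ψ X).val < (ψ Y).val := by omega
    have h5 := circ_le hPQ hC
    omega
  rcases Nat.lt_or_ge k t.val with h1 | h1
  · rw [if_pos h1] at hxval
    rcases Nat.lt_or_ge (3*k+1) t.val with h2 | h2
    · rw [if_pos h2] at hyval
      exact key x y (by omega) hcirc
    · rw [if_neg (by omega)] at hyval
      exact key y x (by omega) (by rw [circd_comm]; exact hcirc)
  · rw [if_neg (by omega)] at hxval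
    rw [if_neg (by omega)] at hyval
    exact key x y (by omega) hcirc

section MatchB
variable {a m : ℕ} (ha : 2 ≤ a) (hm : 1 ≤ m) {ψ : Fin a → Fin (a+2*m-3)}

lemma helperI (hmono : StrictMono ψ) (p q r s : Fin a)
    (hpq : p.val + 1 = q.val) (hrs : r.val + 1 = s.val) (hqr : q.val ≤ r.val)
    (hcp : m ≤ circd (a+2*m-3) (ψ p) (ψ q)) (hcr : m ≤ circd (a+2*m-3) (ψ r) (ψ s)) :
    False := by
  have hs := s.isLt
  have hla : a - 1 < a := by omega
  have h1 := smono_gap hmono 1 p q hpq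
  have h2 := smono_gap hmono 1 r s hrs
  have cb1 := circ_bounds (by omega : (ψ p).val < (ψ q).val) hcp
  have cb2 := circ_bounds (by omega : (ψ r).val < (ψ s).val) hcr
  have g0 := smono_gap hmono p.val ⟨0, by omega⟩ p (by simp)
  have gqr := smono_gap hmono (r.val - q.val) q r (by omega)
  have gs := smono_gap hmono (a-1-s.val) s ⟨a-1, hla⟩ (by simp; omega)
  have hlast := (ψ ⟨a-1, hla⟩).isLt
  omega

lemma helperW (hmono : StrictMono ψ) (P Q p q : Fin a)
    (hP : P.val = 0) (hQ : Q.val = a - 1)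
    (hpq : p.val + 1 = q.val)
    (hcP : m ≤ circd (a+2*m-3) (ψ P) (ψ Q)) (hcp : m ≤ circd (a+2*m-3) (ψ p) (ψ q)) :
    False := by
  have hq := q.isLt
  have h0 := smono_gap hmono (a-1) P Q (by omega)
  have h1 := smono_gap hmono 1 p q hpq
  have cb1 := circ_bounds (by omega : (ψ P).val < (ψ Q).val) hcP
  have cb2 := circ_bounds (by omega : (ψ p).val < (ψ q).val) hcp
  have g1 := smono_gap hmono p.val P p (by omega)
  have g2 := smono_gap hmono (a-1-q.val) q Q (by omega)
  omega

end MatchB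

lemma matchB (a m : ℕ) (ha : 2 ≤ a) (hea : a % 2 = 0) (hm : 1 ≤ m) :
    ¬ ContainsCyc (nestedMatching a)
      (fun u v : Fin (a+2*m-3) => if circd (a+2*m-3) u v ≤ m - 1 then (1 : Fin 2) else 0) 0 := by
  haveI : NeZero a := ⟨by omega⟩
  rintro ⟨φ, ⟨t, hmono⟩, hedge⟩
  set ψ : Fin a → Fin (a+2*m-3) := fun j => φ (j + t) with hψ
  have hφ : ∀ i, φ i = ψ (i - t) := by intro i; simp [hψ, sub_add_cancel]
  have h0a : 0 < a := by omega
  have h1a : a - 1 < a := by omega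
  have h2a : a/2 - 1 < a := by omega
  have h3a : a/2 < a := by omega
  have hadj1 : (nestedMatching a).Adj ⟨0, h0a⟩ ⟨a-1, h1a⟩ := by
    rw [nestedMatching, SimpleGraph.fromRel_adj]
    exact ⟨Fin.ne_of_val_ne (show 0 ≠ a-1 by omega), Or.inl (show 0 + (a-1) = a - 1 by omega)⟩
  have hadj2 : (nestedMatching a).Adj ⟨a/2-1, h2a⟩ ⟨a/2, h3a⟩ := by
    rw [nestedMatching, SimpleGraph.fromRel_adj]
    exact ⟨Fin.ne_of_val_ne (show a/2-1 ≠ a/2 by omega),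
      Or.inl (show a/2-1 + a/2 = a - 1 by omega)⟩
  have hcol1 := hedge _ _ hadj1
  have hcol2 := hedge _ _ hadj2
  rw [hφ, hφ] at hcol1 hcol2
  set x1 : Fin a := ⟨0, h0a⟩ - t with hx1d
  set y1 : Fin a := ⟨a-1, h1a⟩ - t with hy1d
  set x2 : Fin a := ⟨a/2-1, h2a⟩ - t with hx2d
  set y2 : Fin a := ⟨a/2, h3a⟩ - t with hy2d
  have hcol1' : (if circd (a+2*m-3) (ψ x1) (ψ y1) ≤ m - 1 then (1:Fin 2) else 0) = 0 := hcol1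
  have hcol2' : (if circd (a+2*m-3) (ψ x2) (ψ y2) ≤ m - 1 then (1:Fin 2) else 0) = 0 := hcol2
  have hc1 : m ≤ circd (a+2*m-3) (ψ x1) (ψ y1) := by
    by_contra hh
    rw [if_pos (by omega)] at hcol1'
    exact absurd hcol1' (by decide)
  have hc2 : m ≤ circd (a+2*m-3) (ψ x2) (ψ y2) := by
    by_contra hh
    rw [if_pos (by omega)] at hcol2'
    exact absurd hcol2' (by decide)
  have ht := t.isLt
  have hx1 : x1.val = if 0 < t.val then 0 + a - t.val else 0 - t.val := finSubVal _ _
  have hy1 : y1.val = if a-1 < t.val then a-1 + a - t.val else a-1 - t.val := finSubVal _ _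
  have hx2 : x2.val = if a/2-1 < t.val then a/2-1 + a - t.val else a/2-1 - t.val := finSubVal _ _
  have hy2 : y2.val = if a/2 < t.val then a/2 + a - t.val else a/2 - t.val := finSubVal _ _
  rw [if_neg (by omega)] at hy1
  by_cases ht0 : t.val = 0
  · -- wrap pair (x1,y1) = (0, a-1); interior (x2,y2)
    rw [if_neg (by omega)] at hx1
    rw [if_neg (by omega)] at hx2
    rw [if_neg (by omega)] at hy2
    exact helperW hmono x1 y1 x2 y2 (by omega) (by omega) (by omega) hc1 hc2
  · by_cases hth : t.val = a/2
    · -- wrap pair (y2,x2) = (0, a-1); interior (y1,x1)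
      rw [if_pos (by omega)] at hx1
      rw [if_pos (by omega)] at hx2
      rw [if_neg (by omega)] at hy2
      exact helperW hmono y2 x2 y1 x1 (by omega) (by omega) (by omega)
        (by rw [circd_comm]; exact hc2) (by rw [circd_comm]; exact hc1)
    · rcases Nat.lt_or_ge t.val (a/2) with hlt | hgt
      · -- 0 < τ < a/2 : interior (x2,y2) low, interior (y1,x1) high
        rw [if_pos (by omega)] at hx1
        rw [if_neg (by omega)] at hx2
        rw [if_neg (by omega)] at hy2
        exact helperI hmono x2 y2 y1 x1 (by omega) (by omega) (by omega)
          hc2 (by rw [circd_comm]; exact hc1)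
      · -- a/2 < τ : interior (y1,x1) low, interior (x2,y2) high
        rw [if_pos (by omega)] at hx1
        rw [if_pos (by omega)] at hx2
        rw [if_pos (by omega)] at hy2
        exact helperI hmono y1 x1 x2 y2 (by omega) (by omega) (by omega)
          (by rw [circd_comm]; exact hc1) hc2

lemma starOf17 {n b : ℕ} (hb : 2 ≤ b) (χ : Fin n → Fin n → Fin 2) (hsym : ∀ u v, χ u v = χ v u)
    (c : Fin b) (w : Fin n) (T : Finset (Fin n)) (hcard : T.card = b - 1)
    (hT : ∀ v ∈ T, w < v ∧ χ w v = 1) : ContainsCyc (starG b c) χ 1 := by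
  haveI : NeZero b := ⟨by omega⟩
  set g := T.orderIsoOfFin hcard with hg
  set ψ : Fin b → Fin n := fun i => if h : i = 0 then w else
    (g ⟨i.val - 1, by have := i.isLt; omega⟩ : Fin n) with hψdef
  have hψ0 : ψ 0 = w := by simp [hψdef]
  have hψne : ∀ i : Fin b, i ≠ 0 → ψ i ∈ T ∧ w < ψ i := by
    intro i hi
    have : ψ i = (g ⟨i.val - 1, by have := i.isLt; omega⟩ : Fin n) := by simp [hψdef, hi]
    rw [this]
    exact ⟨(g _).2, (hT _ (g _).2).1⟩
  have hψmono : StrictMono ψ := by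
    intro i j hij
    have hj0 : j ≠ 0 := by
      intro hh; subst hh
      exact absurd hij (by simp)
    by_cases hi0 : i = 0
    · subst hi0; rw [hψ0]; exact (hψne j hj0).2
    · have hival : i.val ≠ 0 := fun hh => hi0 (Fin.ext hh)
      have e1 : ψ i = (g ⟨i.val - 1, by have := i.isLt; omega⟩ : Fin n) := by simp [hψdef, hi0]
      have e2 : ψ j = (g ⟨j.val - 1, by have := j.isLt; omega⟩ : Fin n) := by simp [hψdef, hj0]
      rw [e1, e2]
      have hlt : (⟨i.val - 1, by have := i.isLt; omega⟩ : Fin (b-1)) <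
          ⟨j.val - 1, by have := j.isLt; omega⟩ := by
        rw [Fin.lt_def]
        have := Fin.lt_def.mp hij
        simp
        omega
      exact Subtype.coe_lt_coe.mpr (g.lt_iff_lt.mpr hlt)
  refine ⟨fun j => ψ (j - c), ⟨c, ?_⟩, ?_⟩
  · simp only [add_sub_cancel_right]
    exact hψmono
  · intro u v hadj
    rw [starG, SimpleGraph.fromRel_adj] at hadj
    obtain ⟨hne, hc⟩ := hadj
    have key : ∀ v' : Fin b, v' ≠ c → χ (ψ 0) (ψ (v' - c)) = 1 := by
      intro v' hv'
      have hvc : v' - c ≠ 0 := sub_ne_zero_of_ne hv'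
      rw [hψ0]
      exact (hT _ (hψne _ hvc).1).2
    cases hc with
    | inl h =>
      subst h
      show χ (ψ (u - u)) (ψ (v - u)) = 1
      rw [sub_self]
      exact key v (fun hh => hne hh.symm)
    | inr h =>
      subst h
      show χ (ψ (u - v)) (ψ (v - v)) = 1
      rw [sub_self, hsym]
      exact key u hne

lemma gchain {n b : ℕ} (hpos : 0 < n) (hb : 2 ≤ b) (χ : Fin n → Fin n → Fin 2)
    (hdeg : ∀ w : Fin n,
      ((Finset.univ : Finset (Fin n)).filter (fun v => w < v ∧ χ w v = 1)).card ≤ b - 2) :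
    ∀ (m l r : ℕ), r ≤ n → l + b * m ≤ r →
    ∃ f : ℕ → Fin n, (∀ i j, i < j → j < 2*m → f i < f j) ∧
      (∀ i, i < 2*m → l ≤ (f i).val ∧ (f i).val < r) ∧
      (∀ i, i < m → χ (f i) (f (2*m - 1 - i)) = 0) := by
  intro m
  induction m with
  | zero =>
    intro l r _ _
    exact ⟨fun _ => ⟨0, hpos⟩, fun i j _ hj => absurd hj (by omega),
      fun i hi => absurd hi (by omega), fun i hi => absurd hi (by omega)⟩
  | succ m ih =>
    intro l r hr hlr
    have hbmul : b * (m+1) = b * m + b := by ring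
    have hln : l < n := by omega
    set x : Fin n := ⟨l, hln⟩ with hxd
    have hy : ∃ y : Fin n, (r - (b-1) ≤ y.val ∧ y.val < r) ∧ χ x y = 0 := by
      by_contra hcon
      push_neg at hcon
      have hmap : ∀ i : Fin (b-1),
          (⟨r - (b-1) + i.val, by have := i.isLt; omega⟩ : Fin n) ∈
            (Finset.univ.filter (fun v => x < v ∧ χ x v = 1)) := by
        intro i
        have hiv := i.isLt
        set y : Fin n := ⟨r - (b-1) + i.val, by omega⟩ with hyd
        have hyv : r - (b-1) ≤ y.val ∧ y.val < r := by
          rw [hyd]; constructor <;> simp <;> omega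
        have h0 := hcon y hyv
        have h1 : χ x y = 1 := by
          rcases fin2cases (χ x y) with h | h
          · exact absurd h h0
          · exact h
        have hxy : x < y := by rw [Fin.lt_def, hxd, hyd]; simp; omega
        simp only [Finset.mem_filter]
        exact ⟨Finset.mem_univ _, hxy, h1⟩
      have hcard : (Finset.univ : Finset (Fin (b-1))).card ≤
          (Finset.univ.filter (fun v => x < v ∧ χ x v = 1)).card :=
        Finset.card_le_card_of_injOn
        (fun i : Fin (b-1) => (⟨r - (b-1) + i.val, by have := i.isLt; omega⟩ : Fin n))
        (fun i _ => hmap i)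
        (by
          intro i _ j _ hij
          have := congrArg Fin.val hij
          simp at this
          exact Fin.ext (by omega))
      rw [Finset.card_univ, Fintype.card_fin] at hcard
      have := hdeg x
      omega
    obtain ⟨y, ⟨hy1, hy2⟩, hxy⟩ := hy
    obtain ⟨f', hf1, hf2, hf3⟩ := ih (l+1) y.val (by omega) (by omega)
    refine ⟨fun i => if i = 0 then x else if i = 2*m+1 then y else f' (i - 1), ?_, ?_, ?_⟩
    · intro i j hij hj2
      beta_reduce
      have hxly : x < y := by rw [Fin.lt_def]; simp [hxd]; omega
      by_cases hi0 : i = 0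
      · subst hi0
        rw [if_pos rfl]
        by_cases hj1 : j = 2*m+1
        · rw [if_neg (by omega), if_pos hj1]; exact hxly
        · rw [if_neg (by omega), if_neg hj1]
          have hb2 := (hf2 (j-1) (by omega)).1
          rw [Fin.lt_def]; simp [hxd]; omega
      · rw [if_neg hi0, if_neg (by omega)]
        by_cases hj1 : j = 2*m+1
        · rw [if_neg (by omega), if_pos hj1]
          have := (hf2 (i-1) (by omega)).2
          rw [Fin.lt_def]; omega
        · rw [if_neg (by omega), if_neg hj1]
          exact hf1 (i-1) (j-1) (by omega) (by omega)
    · intro i hi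
      beta_reduce
      by_cases hi0 : i = 0
      · subst hi0; rw [if_pos rfl]; simp [hxd]; omega
      · rw [if_neg hi0]
        by_cases hj1 : i = 2*m+1
        · rw [if_pos hj1]; omega
        · rw [if_neg hj1]
          have := hf2 (i-1) (by omega)
          omega
    · intro i hi
      beta_reduce
      by_cases hi0 : i = 0
      · subst hi0
        have h1 : 2*(m+1) - 1 - 0 = 2*m+1 := by omega
        rw [h1, if_pos rfl, if_neg (by omega), if_pos rfl]
        exact hxy
      · have h1 : 2*(m+1) - 1 - i = 2*m+1-i := by omega
        rw [h1, if_neg hi0, if_neg (by omega), if_neg (by omega), if_neg (by omega)]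
        have h2 : 2*m+1-i-1 = 2*m - 1 - (i-1) := by omega
        rw [h2]
        exact hf3 (i-1) (by omega)

lemma mem_ramsey (a b : ℕ) (ha : 2 ≤ a) (hea : a % 2 = 0) (hb : 2 ≤ b) (c : Fin b)
    (χ : Fin (a*b) → Fin (a*b) → Fin 2) (hsym : ∀ u v, χ u v = χ v u) :
    ContainsCyc (nestedMatching a) χ 0 ∨ ContainsCyc (starG b c) χ 1 := by
  have hpos : 0 < a*b := by positivity
  by_cases hstar : ContainsCyc (starG b c) χ 1
  · exact Or.inr hstar
  left
  have hdeg : ∀ w : Fin (a*b),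
      ((Finset.univ : Finset (Fin (a*b))).filter (fun v => w < v ∧ χ w v = 1)).card ≤ b - 2 := by
    intro w
    by_contra hcon
    obtain ⟨T, hTsub, hTcard⟩ := Finset.exists_subset_card_eq
      (show b - 1 ≤ (Finset.univ.filter (fun v => w < v ∧ χ w v = 1)).card by omega)
    refine hstar (starOf17 hb χ hsym c w T hTcard ?_)
    intro v hv
    have := hTsub hv
    simp only [Finset.mem_filter] at this
    exact this.2
  obtain ⟨f, hf1, hf2, hf3⟩ := gchain hpos hb χ hdeg (a/2) 0 (a*b) le_rfl
    (by
      have h1 : b * (a/2) ≤ b * a := Nat.mul_le_mul_left b (by omega)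
      have h2 : b * a = a * b := Nat.mul_comm b a
      omega)
  have h2m : 2 * (a/2) = a := by omega
  have hapos : 0 < a := by omega
  have hadd : ∀ i : Fin a, i + (⟨0, hapos⟩ : Fin a) = i := by
    intro i
    apply Fin.ext
    rw [Fin.add_def]
    simp [Nat.mod_eq_of_lt i.isLt]
  refine ⟨fun i => f i.val, ⟨⟨0, hapos⟩, ?_⟩, ?_⟩
  · simp only [hadd]
    intro i j hij
    exact hf1 i.val j.val (Fin.lt_def.mp hij) (by have := j.isLt; omega)
  · intro u v hadj
    rw [nestedMatching, SimpleGraph.fromRel_adj] at hadj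
    obtain ⟨hne, hsum⟩ := hadj
    have hsum' : u.val + v.val = a - 1 := by rcases hsum with h | h <;> omega
    have hu := u.isLt
    have hv := v.isLt
    have hnev : u.val ≠ v.val := fun hh => hne (Fin.ext hh)
    rcases Nat.lt_or_ge u.val v.val with hlt | hge
    · have hv2 : v.val = 2*(a/2) - 1 - u.val := by omega
      have := hf3 u.val (by omega)
      rw [← hv2] at this
      exact this
    · have hu2 : u.val = 2*(a/2) - 1 - v.val := by omega
      have := hf3 v.val (by omega)
      rw [← hu2] at this
      rw [hsym]
      exact this

lemma liftCyc {n N m k : ℕ} (h : n ≤ N) (H : SimpleGraph (Fin m))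
    (χ' : Fin N → Fin N → Fin k) (j : Fin k) :
    ContainsCyc H (fun u v => χ' (Fin.castLE h u) (Fin.castLE h v)) j → ContainsCyc H χ' j := by
  rintro ⟨φ, ⟨t, hmono⟩, hedge⟩
  refine ⟨fun i => Fin.castLE h (φ i), ⟨t, ?_⟩, fun u v huv => hedge u v huv⟩
  intro i j hij
  have h2 : (φ (i + t)).val < (φ (j + t)).val := hmono hij
  show (Fin.castLE h (φ (i + t))).val < (Fin.castLE h (φ (j + t))).val
  simpa using h2

theorem stmt17 (a b : ℕ) (ha : 2 ≤ a) (hea : Even a) (hb : 2 ≤ b)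
    (h : a % 4 = 2 ∨ Even b) (c : Fin b) :
    a + b - 2 ≤ Rcyc2 (nestedMatching a) (starG b c) := by
  have hea2 : a % 2 = 0 := Nat.even_iff.mp hea
  have hmem : (a * b) ∈ {n | ∀ χ : Fin n → Fin n → Fin 2, (∀ u v, χ u v = χ v u) →
      ContainsCyc (nestedMatching a) χ 0 ∨ ContainsCyc (starG b c) χ 1} :=
    fun χ hsym => mem_ramsey a b ha hea2 hb c χ hsym
  set n0 := Rcyc2 (nestedMatching a) (starG b c) with hn0
  have hinf : n0 ∈ {n | ∀ χ : Fin n → Fin n → Fin 2, (∀ u v, χ u v = χ v u) →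
      ContainsCyc (nestedMatching a) χ 0 ∨ ContainsCyc (starG b c) χ 1} := by
    rw [hn0]
    exact Nat.sInf_mem ⟨a*b, hmem⟩
  clear_value n0
  by_contra hcon
  push_neg at hcon
  rcases h with hA | hB
  · obtain ⟨k, rfl⟩ : ∃ k, a = 4*k+2 := ⟨a/4, by omega⟩
    have hle : n0 ≤ 4*k+2+b-3 := by omega
    have hres := hinf
      (fun u v => (fun u v : Fin (4*k+2+b-3) =>
          if circd (4*k+2+b-3) u v ≤ 2*k then (0 : Fin 2) else 1)
        (Fin.castLE hle u) (Fin.castLE hle v))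
      (fun u v => by beta_reduce; rw [circd_comm])
    rcases hres with hM | hSt
    · exact matchA b k hb (liftCyc hle _ _ _ hM)
    · exact starA b k hb c (liftCyc hle _ _ _ hSt)
  · obtain ⟨m, rfl⟩ : ∃ m, b = 2*m := ⟨b/2, by have := Nat.even_iff.mp hB; omega⟩
    have hm : 1 ≤ m := by omega
    have hle : n0 ≤ a+2*m-3 := by omega
    have hres := hinf
      (fun u v => (fun u v : Fin (a+2*m-3) =>
          if circd (a+2*m-3) u v ≤ m - 1 then (1 : Fin 2) else 0)
        (Fin.castLE hle u) (Fin.castLE hle v))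
      (fun u v => by beta_reduce; rw [circd_comm])
    rcases hres with hM | hSt
    · exact matchB a m ha hea2 hm (liftCyc hle _ _ _ hM)
    · exact starB a m ha hm c (liftCyc hle _ _ _ hSt)
end
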